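/- Let G be a connected graph with m edges and Perron vector x, let u* be a vertex with maximum entry x_{u*}, U = N(u*), W = V(G)∖(U∪{u*}), U_0 = {u∈U : d_U(u)=0}, U_+ = U∖U_0. Suppose λ(G) > (1 + √(4m−7))/2 and there is a vertex v_j of G with x_j < (1−α)·x_{u*}, where 0 < α < 1. Then: if v_j ∈ W, then e(W) < e(U) − |U_+| + 2 − α·d_U(v_j); and if v_j ∈ U_+, then e(W) < e(U) − |U_+| + 2 − α·(d_U(v_j) − 1). -/

import Mathlib

open Finset

/-- The spectral radius of a finite simple graph: the supremum of the real
spectrum of its adjacency matrix. -/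
noncomputable def specRad {V : Type*} [Fintype V] [DecidableEq V] (G : SimpleGraph V) : ℝ :=
  letI := Classical.decRel G.Adj
  sSup (spectrum ℝ (SimpleGraph.adjMatrix ℝ G))

/-- The fish graph `H(4,3)`: a 4-cycle 0-1-2-3-0 and a triangle 0-4-5 sharing vertex 0. -/
def H43 : SimpleGraph (Fin 6) :=
  SimpleGraph.fromEdgeSet {s(0, 1), s(1, 2), s(2, 3), s(3, 0), s(0, 4), s(4, 5), s(5, 0)}

/-- The bowtie graph `H(3,3)` (also `F₂`): two triangles 0-1-2 and 0-3-4 sharing vertex 0. -/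
def H33 : SimpleGraph (Fin 5) :=
  SimpleGraph.fromEdgeSet {s(0, 1), s(1, 2), s(2, 0), s(0, 3), s(3, 4), s(4, 0)}

/-- `G` contains a (not necessarily induced) subgraph isomorphic to `H`. -/
def HasSubgraphCopy {W V : Type*} (H : SimpleGraph W) (G : SimpleGraph V) : Prop :=
  ∃ f : W → V, Function.Injective f ∧ ∀ ⦃a b⦄, H.Adj a b → G.Adj (f a) (f b)

/-- `G` is `H`-free: it contains no subgraph isomorphic to `H`. -/
def GraphFree {W V : Type*} (H : SimpleGraph W) (G : SimpleGraph V) : Prop :=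
  ¬ HasSubgraphCopy H G

/-- The book graph `K₂ ∨ k·K₁`, on vertices `Fin (k+2)`: vertices 0 and 1 form the `K₂`
and are joined to all of the `k` remaining independent vertices. -/
def bookGraph (k : ℕ) : SimpleGraph (Fin (k + 2)) where
  Adj x y := x ≠ y ∧ (x.val < 2 ∨ y.val < 2)
  symm := ⟨fun _ _ h => ⟨h.1.symm, h.2.symm⟩⟩
  loopless := ⟨fun _ h => h.1 rfl⟩

/-- `S⁻`: the graph obtained from the book graph `K₂ ∨ k·K₁` by deleting one edge
incident to a vertex of degree two (the edge between vertices 1 and 2). -/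
def bookMinus (k : ℕ) : SimpleGraph (Fin (k + 2)) where
  Adj x y := x ≠ y ∧ (x.val < 2 ∨ y.val < 2) ∧
    ¬(x.val = 1 ∧ y.val = 2) ∧ ¬(x.val = 2 ∧ y.val = 1)
  symm := by
    constructor
    rintro x y ⟨h1, h2, h3, h4⟩
    exact ⟨h1.symm, h2.symm, fun h => h4 ⟨h.2, h.1⟩, fun h => h3 ⟨h.2, h.1⟩⟩
  loopless := ⟨fun _ h => h.1 rfl⟩

/-- The graph `K₁ ∨ (K_{1,t} ∪ 2K₁)` on `Fin (t+4)`: vertex 0 is the apex joined to all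
other vertices, vertex 1 is the star center joined to the `t` leaves `4, …, t+3`,
and vertices 2, 3 are the two extra vertices (joined only to the apex). -/
def extGraph (t : ℕ) : SimpleGraph (Fin (t + 4)) where
  Adj x y := x ≠ y ∧ (x.val = 0 ∨ y.val = 0 ∨ (x.val = 1 ∧ 4 ≤ y.val) ∨ (y.val = 1 ∧ 4 ≤ x.val))
  symm := by
    constructor
    rintro x y ⟨h1, h2⟩
    exact ⟨h1.symm, by tauto⟩
  loopless := ⟨fun _ h => h.1 rfl⟩

/-- The star `K_{1,r}` on `Fin (r+1)`, with center 0. -/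
def starGraph (r : ℕ) : SimpleGraph (Fin (r + 1)) where
  Adj x y := x ≠ y ∧ (x.val = 0 ∨ y.val = 0)
  symm := ⟨fun _ _ h => ⟨h.1.symm, h.2.symm⟩⟩
  loopless := ⟨fun _ h => h.1 rfl⟩

/-- Membership in the family `𝒢(m, H(4,3))`: `H(4,3)`-free, `m` edges, no isolated vertices. -/
def memFamily {V : Type*} [Fintype V] [DecidableEq V] (m : ℕ) (G : SimpleGraph V) : Prop :=
  GraphFree H43 G ∧ G.edgeSet.ncard = m ∧ ∀ v : V, ∃ w, G.Adj v w

/-- `e(S)`: the number of edges of `G` with both endpoints in `S`. -/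
noncomputable def eIn {V : Type*} (G : SimpleGraph V) (S : Set V) : ℕ :=
  {e ∈ G.edgeSet | ∀ v ∈ e, v ∈ S}.ncard

/-- `e(S,T)`: the number of edges of `G` with one endpoint in `S` and the other in `T`. -/
noncomputable def eBetween {V : Type*} (G : SimpleGraph V) (S T : Set V) : ℕ :=
  {e ∈ G.edgeSet | ∃ a ∈ S, ∃ b ∈ T, e = s(a, b)}.ncard

/-- `d_S(u)`: the number of neighbours of `u` inside `S`. -/
noncomputable def dIn {V : Type*} (G : SimpleGraph V) (S : Set V) (u : V) : ℕ :=
  (S ∩ G.neighborSet u).ncard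

/-- `U = N(u)`. -/
def Uset {V : Type*} (G : SimpleGraph V) (u : V) : Set V := G.neighborSet u

/-- `W = V(G) \ (U ∪ {u})`. -/
def Wset {V : Type*} (G : SimpleGraph V) (u : V) : Set V :=
  Set.univ \ (G.neighborSet u ∪ {u})

/-- `U₀ = {v ∈ U : d_U(v) = 0}`. -/
noncomputable def U0set {V : Type*} (G : SimpleGraph V) (u : V) : Set V :=
  {v ∈ G.neighborSet u | dIn G (G.neighborSet u) v = 0}

/-- `U₊ = U \ U₀`. -/
noncomputable def Uplusset {V : Type*} (G : SimpleGraph V) (u : V) : Set V :=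
  {v ∈ G.neighborSet u | dIn G (G.neighborSet u) v ≠ 0}

/-- `G` attains the maximum spectral radius among all graphs in `𝒢(m, H(4,3))` other than
the book graph `K₂ ∨ ((m-1)/2)·K₁`. -/
def isExtremal {V : Type*} [Fintype V] [DecidableEq V] (m : ℕ) (G : SimpleGraph V) : Prop :=
  memFamily m G ∧ ¬ Nonempty (G ≃g bookGraph ((m - 1) / 2)) ∧
    ∀ (n : ℕ) (H : SimpleGraph (Fin n)), memFamily m H →
      ¬ Nonempty (H ≃g bookGraph ((m - 1) / 2)) → specRad H ≤ specRad G

/-! Count walks of length two from `u*`. The eigenvalue equation gives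
`λ x_{u*} = ∑_{u ∈ U} x_u` and
`λ² x_{u*} = |U| x_{u*} + ∑_{w ∈ U} d_U(w) x_w + ∑_{w ∈ W} d_U(w) x_w`, so
`(λ² - λ) x_{u*} = |U| x_{u*} + ∑_{w ∈ U} (d_U(w) - 1) x_w + ∑_{w ∈ W} d_U(w) x_w`.
The terms of `U₀` are negative; bounding every other `x_w` by `x_{u*}`, and `x_{v_j}` by
`(1 - α) x_{u*}`, and using `∑_{w ∈ U} d_U(w) = 2 e(U)` and `m = |U| + e(U) + e(W) + e(U, W)`
with `e(U, W) = ∑_{w ∈ W} d_U(w)`, yields `λ² - λ ≤ m + e(U) - e(W) - |U₊| - α·d`, where `d` is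
`d_U(v_j)` or `d_U(v_j) - 1`, while the hypothesis on `λ` gives `λ² - λ > m - 2`. -/

theorem sub_two_lt_sq_sub_self_of_lt {m l : ℝ} (h : (1 + √(4 * m - 7)) / 2 < l) :
    m - 2 < l ^ 2 - l := by
  have hs := Real.sqrt_nonneg (4 * m - 7)
  have hsq : 4 * m - 7 ≤ √(4 * m - 7) ^ 2 := Real.sq_sqrt' (x := 4 * m - 7) ▸ le_max_left _ _
  nlinarith

namespace Finset

variable {ι : Type*} (s : Finset ι) {c x : ι → ℝ} {M : ℝ}

theorem sum_mul_le_sum_mul_of_le (hc : ∀ i ∈ s, 0 ≤ c i) (hx : ∀ i ∈ s, x i ≤ M) :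
    ∑ i ∈ s, c i * x i ≤ (∑ i ∈ s, c i) * M := by
  rw [sum_mul]
  exact sum_le_sum fun i hi => mul_le_mul_of_nonneg_left (hx i hi) (hc i hi)

theorem sum_mul_le_sub_mul_of_le (hc : ∀ i ∈ s, 0 ≤ c i) (hx : ∀ i ∈ s, x i ≤ M) {j : ι}
    (hj : j ∈ s) {α : ℝ} (hxj : x j ≤ (1 - α) * M) :
    ∑ i ∈ s, c i * x i ≤ (∑ i ∈ s, c i - α * c j) * M := by
  classical
  have hrest := sum_mul_le_sum_mul_of_le (s.erase j) (fun i hi => hc i (mem_of_mem_erase hi))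
    fun i hi => hx i (mem_of_mem_erase hi)
  have hjj := mul_le_mul_of_nonneg_left hxj (hc j hj)
  rw [← add_sum_erase s _ hj, ← add_sum_erase s c hj]
  linarith

theorem sum_sub_one_mul_le_sum_filter (d : ι → ℕ) (hx : ∀ i ∈ s, 0 ≤ x i) :
    ∑ i ∈ s, ((d i : ℝ) - 1) * x i ≤ ∑ i ∈ s with d i ≠ 0, ((d i : ℝ) - 1) * x i := by
  rw [← sum_filter_add_sum_filter_not s (d · ≠ 0)]
  have hzero : ∑ i ∈ s with ¬d i ≠ 0, ((d i : ℝ) - 1) * x i ≤ 0 :=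
    sum_nonpos fun i hi => by
      obtain ⟨hi, hdi⟩ := mem_filter.1 hi
      simp [not_not.1 hdi, hx i hi]
  linarith

theorem sub_one_nonneg_of_mem_filter_ne_zero {d : ι → ℕ} {i : ι}
    (hi : i ∈ s.filter (d · ≠ 0)) : 0 ≤ (d i : ℝ) - 1 :=
  sub_nonneg.2 (Nat.one_le_cast.2 (Nat.one_le_iff_ne_zero.2 (mem_filter.1 hi).2))

theorem sum_filter_ne_zero_sub_one (d : ι → ℕ) :
    ∑ i ∈ s with d i ≠ 0, ((d i : ℝ) - 1) = ∑ i ∈ s, (d i : ℝ) - #{i ∈ s | d i ≠ 0} := by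
  rw [sum_sub_distrib, sum_const, nsmul_one, sum_filter_of_ne fun i _ hi => by exact_mod_cast hi]

end Finset

section

open SimpleGraph

variable {V : Type*} [Fintype V] {G : SimpleGraph V} [DecidableRel G.Adj]

theorem Uset_eq_coe (u : V) : Uset G u = G.neighborFinset u := (G.coe_neighborFinset u).symm

theorem Uplusset_eq_coe (u : V) :
    Uplusset G u = ↑{b ∈ G.neighborFinset u | dIn G (Uset G u) b ≠ 0} := by
  ext b; simp only [Uplusset, coe_filter, mem_neighborFinset, mem_neighborSet]; rfl

theorem sum_neighborFinset_eq_mul_of_mulVec_eq {R : Type*} [NonAssocSemiring R] {x : V → R}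
    {l : R} (h : (G.adjMatrix R).mulVec x = l • x) (v : V) :
    ∑ b ∈ G.neighborFinset v, x b = l * x v := by
  simpa using congrFun h v

variable [DecidableEq V]

theorem eIn_coe (s : Finset V) : eIn G s = #(G.edgeFinset ∩ s.sym2) := by
  rw [eIn, ← Set.ncard_coe_finset]
  congr 1
  ext e
  induction e using Sym2.ind with
  | _ a b => simp [Sym2.mem_iff]

theorem dIn_coe (s : Finset V) (a : V) : dIn G s a = #(s ∩ G.neighborFinset a) := by
  rw [dIn, ← Set.ncard_coe_finset, Finset.coe_inter, coe_neighborFinset]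

theorem two_mul_eIn (s : Finset V) : 2 * eIn G s = ∑ a ∈ s, dIn G s a := by
  simp_rw [dIn_coe]
  have hs := map_edgeFinset_induce (G := G) (s := (s : Set V))
  rw [Finset.toFinset_coe] at hs
  rw [eIn_coe, ← hs, card_map, ← sum_degrees_eq_twice_card_edges,
    ← sum_coe_sort s fun a => #(s ∩ G.neighborFinset a)]
  refine sum_congr (by ext; simp) fun a _ => ?_
  have ha := map_neighborFinset_induce (G := G) (s := (s : Set V)) a
  rw [Finset.toFinset_coe] at ha
  rw [← card_neighborFinset_eq_degree, ← card_map, ha, inter_comm]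

variable {M : Type*} [AddCommMonoid M]

theorem sum_sum_inter_neighborFinset_comm (s t : Finset V) (f : V → M) :
    ∑ a ∈ s, ∑ b ∈ t ∩ G.neighborFinset a, f b = ∑ b ∈ t, #(s ∩ G.neighborFinset b) • f b := by
  simp_rw [← sum_ite_mem, mem_neighborFinset]
  rw [sum_comm]
  refine sum_congr rfl fun b _ => ?_
  rw [← sum_filter, sum_const]
  congr 2
  ext a
  simp [adj_comm]

def Wfinset (G : SimpleGraph V) [DecidableRel G.Adj] (u : V) : Finset V :=
  (insert u (G.neighborFinset u))ᶜ

theorem coe_Wfinset (u : V) : (Wfinset G u : Set V) = Wset G u := by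
  ext; simp [Wfinset, Wset, and_comm]

theorem sum_eq_add_sum_neighborFinset_add_sum_Wfinset (u : V) (f : V → M) :
    ∑ v, f v = f u + ∑ v ∈ G.neighborFinset u, f v + ∑ v ∈ Wfinset G u, f v := by
  rw [← sum_add_sum_compl (insert u (G.neighborFinset u)), sum_insert (by simp), Wfinset]

theorem sum_neighborFinset_eq_add_sum_inter_add_sum_inter (u a : V) (f : V → M) :
    ∑ b ∈ G.neighborFinset a, f b = (if G.Adj a u then f u else 0)
      + ∑ b ∈ G.neighborFinset u ∩ G.neighborFinset a, f b
      + ∑ b ∈ Wfinset G u ∩ G.neighborFinset a, f b := by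
  have h := sum_eq_add_sum_neighborFinset_add_sum_Wfinset (G := G) u
    fun b => if b ∈ G.neighborFinset a then f b else 0
  rw [sum_ite_mem, univ_inter, sum_ite_mem, sum_ite_mem] at h
  simpa only [mem_neighborFinset] using h

theorem card_edgeFinset_eq_add_eIn_add_eIn (u : V) :
    #G.edgeFinset = #(G.neighborFinset u) + eIn G (Uset G u) + eIn G (Wset G u)
      + ∑ w ∈ Wfinset G u, dIn G (Uset G u) w := by
  rw [Uset_eq_coe, ← coe_Wfinset]
  simp only [dIn_coe]
  have hdeg (a : V) : G.degree a = (if G.Adj a u then 1 else 0)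
      + #(G.neighborFinset u ∩ G.neighborFinset a) + #(Wfinset G u ∩ G.neighborFinset a) := by
    simp only [← card_neighborFinset_eq_degree, card_eq_sum_ones]
    exact sum_neighborFinset_eq_add_sum_inter_add_sum_inter (G := G) u a fun _ => 1
  have hU := two_mul_eIn (G := G) (G.neighborFinset u)
  have hW := two_mul_eIn (G := G) (Wfinset G u)
  have hUW := sum_sum_inter_neighborFinset_comm (G := G) (G.neighborFinset u) (Wfinset G u)
    fun _ => 1
  have h := G.sum_degrees_eq_twice_card_edges
  rw [sum_eq_add_sum_neighborFinset_add_sum_Wfinset (G := G) u,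
    ← card_neighborFinset_eq_degree] at h
  simp only [hdeg, sum_add_distrib, sum_boole] at h
  rw [filter_true_of_mem fun a ha => ((mem_neighborFinset G u a).1 ha).symm,
    filter_false_of_mem fun w hw => fun hadj => by simp [Wfinset, hadj.symm] at hw] at h
  simp only [dIn_coe] at hU hW
  simp only [smul_eq_mul, mul_one, ← card_eq_sum_ones] at hUW
  simp only [card_empty, Nat.cast_id] at h
  omega

theorem sq_sub_mul_eq_of_mulVec_eq {R : Type*} [CommRing R] {x : V → R} {l : R}
    (h : (G.adjMatrix R).mulVec x = l • x) (u : V) :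
    (l ^ 2 - l) * x u = #(G.neighborFinset u) * x u
      + ∑ b ∈ G.neighborFinset u, ((dIn G (Uset G u) b : R) - 1) * x b
      + ∑ b ∈ Wfinset G u, (dIn G (Uset G u) b : R) * x b := by
  have hx := sum_neighborFinset_eq_mul_of_mulVec_eq h
  have hsq : l ^ 2 * x u = ∑ a ∈ G.neighborFinset u, ∑ b ∈ G.neighborFinset a, x b := by
    rw [sq, mul_assoc, ← hx, mul_sum]
    exact sum_congr rfl fun a _ => (hx a).symm
  rw [sum_congr rfl fun a ha => by
      rw [sum_neighborFinset_eq_add_sum_inter_add_sum_inter u a,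
        if_pos ((mem_neighborFinset G u a).1 ha).symm]] at hsq
  simp only [sum_add_distrib, sum_const, sum_sum_inter_neighborFinset_comm,
    nsmul_eq_mul] at hsq
  simp only [Uset_eq_coe, dIn_coe, sub_mul, one_mul, sum_sub_distrib, hx]
  linear_combination hsq

theorem eIn_Wset_lt_of_sum_le {x : V → ℝ} {l : ℝ} {m : ℕ}
    (heig : (G.adjMatrix ℝ).mulVec x = l • x) (hm : G.edgeSet.ncard = m)
    (hlam : (1 + √(4 * (m : ℝ) - 7)) / 2 < l) {u : V} (hxu : 0 < x u) {δ : ℝ}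
    (hsum : ∑ b ∈ G.neighborFinset u, ((dIn G (Uset G u) b : ℝ) - 1) * x b
        + ∑ b ∈ Wfinset G u, (dIn G (Uset G u) b : ℝ) * x b
      ≤ (∑ b ∈ G.neighborFinset u, (dIn G (Uset G u) b : ℝ) - (Uplusset G u).ncard
        + ∑ b ∈ Wfinset G u, (dIn G (Uset G u) b : ℝ) - δ) * x u) :
    (eIn G (Wset G u) : ℝ) < eIn G (Uset G u) - (Uplusset G u).ncard + 2 - δ := by
  have hid := sq_sub_mul_eq_of_mulVec_eq heig u
  have hle : l ^ 2 - l ≤ #(G.neighborFinset u)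
      + (∑ b ∈ G.neighborFinset u, (dIn G (Uset G u) b : ℝ) - (Uplusset G u).ncard
        + ∑ b ∈ Wfinset G u, (dIn G (Uset G u) b : ℝ) - δ) :=
    le_of_mul_le_mul_right (by rw [add_mul]; linarith) hxu
  have hedges : (m : ℝ) = #(G.neighborFinset u) + eIn G (Uset G u) + eIn G (Wset G u)
      + ∑ w ∈ Wfinset G u, (dIn G (Uset G u) w : ℝ) := by
    rw [← hm, ← coe_edgeFinset, Set.ncard_coe_finset, card_edgeFinset_eq_add_eIn_add_eIn u]
    push_cast; ring
  have hU : (2 * eIn G (Uset G u) : ℝ) = ∑ b ∈ G.neighborFinset u, (dIn G (Uset G u) b : ℝ) := by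
    rw [Uset_eq_coe]; exact_mod_cast two_mul_eIn (G.neighborFinset u)
  linarith [sub_two_lt_sq_sub_self_of_lt hlam]

theorem eIn_Wset_lt_of_mem_Wset {x : V → ℝ} {l : ℝ} {m : ℕ}
    (heig : (G.adjMatrix ℝ).mulVec x = l • x) (hm : G.edgeSet.ncard = m)
    (hlam : (1 + √(4 * (m : ℝ) - 7)) / 2 < l) {u : V} (hpos : ∀ v, 0 < x v)
    (hmax : ∀ v, x v ≤ x u) {α : ℝ} {j : V} (hxj : x j < (1 - α) * x u) (hj : j ∈ Wset G u) :
    (eIn G (Wset G u) : ℝ) <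
      eIn G (Uset G u) - (Uplusset G u).ncard + 2 - α * dIn G (Uset G u) j := by
  refine eIn_Wset_lt_of_sum_le heig hm hlam (hpos u) ?_
  have hU := (G.neighborFinset u).sum_sub_one_mul_le_sum_filter (dIn G (Uset G u))
    fun b _ => (hpos b).le
  have hU' := sum_mul_le_sum_mul_of_le {b ∈ G.neighborFinset u | dIn G (Uset G u) b ≠ 0}
    (fun _ hb => sub_one_nonneg_of_mem_filter_ne_zero _ hb) fun b _ => hmax b
  rw [← coe_Wfinset] at hj
  have hW := sum_mul_le_sub_mul_of_le (Wfinset G u) (c := fun b => (dIn G (Uset G u) b : ℝ))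
    (fun _ _ => Nat.cast_nonneg _) (fun b _ => hmax b) hj hxj.le
  rw [sum_filter_ne_zero_sub_one] at hU'
  rw [Uplusset_eq_coe, Set.ncard_coe_finset]
  linarith

theorem eIn_Wset_lt_of_mem_Uplusset {x : V → ℝ} {l : ℝ} {m : ℕ}
    (heig : (G.adjMatrix ℝ).mulVec x = l • x) (hm : G.edgeSet.ncard = m)
    (hlam : (1 + √(4 * (m : ℝ) - 7)) / 2 < l) {u : V} (hpos : ∀ v, 0 < x v)
    (hmax : ∀ v, x v ≤ x u) {α : ℝ} {j : V} (hxj : x j < (1 - α) * x u) (hj : j ∈ Uplusset G u) :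
    (eIn G (Wset G u) : ℝ) <
      eIn G (Uset G u) - (Uplusset G u).ncard + 2 - α * (dIn G (Uset G u) j - 1) := by
  refine eIn_Wset_lt_of_sum_le heig hm hlam (hpos u) ?_
  have hU := (G.neighborFinset u).sum_sub_one_mul_le_sum_filter (dIn G (Uset G u))
    fun b _ => (hpos b).le
  rw [Uplusset_eq_coe, mem_coe] at hj
  have hU' := sum_mul_le_sub_mul_of_le _
    (fun _ hb => sub_one_nonneg_of_mem_filter_ne_zero _ hb) (fun b _ => hmax b) hj hxj.le
  have hW := sum_mul_le_sum_mul_of_le (Wfinset G u) (c := fun b => (dIn G (Uset G u) b : ℝ))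
    (fun _ _ => Nat.cast_nonneg _) fun b _ => hmax b
  rw [sum_filter_ne_zero_sub_one] at hU'
  rw [Uplusset_eq_coe, Set.ncard_coe_finset]
  linarith

end

theorem stmt_5_general {V : Type*} [Fintype V] [DecidableEq V] (G : SimpleGraph V)
    [DecidableRel G.Adj]
    (m : ℕ) (hm : G.edgeSet.ncard = m)
    (x : V → ℝ) (hpos : ∀ v, 0 < x v)
    (heig : (SimpleGraph.adjMatrix ℝ G).mulVec x = specRad G • x)
    (ustar : V) (hmaxx : ∀ v, x v ≤ x ustar)
    (α : ℝ)
    (vj : V) (hvj : x vj < (1 - α) * x ustar)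
    (hlam : (1 + Real.sqrt (4 * (m : ℝ) - 7)) / 2 < specRad G) :
    (vj ∈ Wset G ustar →
      (eIn G (Wset G ustar) : ℝ) <
        (eIn G (Uset G ustar) : ℝ) - ((Uplusset G ustar).ncard : ℝ) + 2
          - α * (dIn G (Uset G ustar) vj : ℝ)) ∧
    (vj ∈ Uplusset G ustar →
      (eIn G (Wset G ustar) : ℝ) <
        (eIn G (Uset G ustar) : ℝ) - ((Uplusset G ustar).ncard : ℝ) + 2
          - α * ((dIn G (Uset G ustar) vj : ℝ) - 1)) :=
  ⟨eIn_Wset_lt_of_mem_Wset heig hm hlam hpos hmaxx hvj,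
    eIn_Wset_lt_of_mem_Uplusset heig hm hlam hpos hmaxx hvj⟩

/-- If `λ(G) > (1 + √(4m-7))/2` and `x_j < (1-α)x_{u*}` with `0 < α < 1`, then
`e(W) < e(U) - |U₊| + 2 - α·d_U(v_j)` for `v_j ∈ W`, and
`e(W) < e(U) - |U₊| + 2 - α·(d_U(v_j) - 1)` for `v_j ∈ U₊`. -/
theorem stmt_5 {V : Type*} [Fintype V] [DecidableEq V] (G : SimpleGraph V)
    [DecidableRel G.Adj] (hconn : G.Connected)
    (m : ℕ) (hm : G.edgeSet.ncard = m)
    (x : V → ℝ) (hpos : ∀ v, 0 < x v) (hunit : ∑ v : V, x v ^ 2 = 1)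
    (heig : (SimpleGraph.adjMatrix ℝ G).mulVec x = specRad G • x)
    (ustar : V) (hmaxx : ∀ v, x v ≤ x ustar)
    (α : ℝ) (hα0 : 0 < α) (hα1 : α < 1)
    (vj : V) (hvj : x vj < (1 - α) * x ustar)
    (hlam : (1 + Real.sqrt (4 * (m : ℝ) - 7)) / 2 < specRad G) :
    (vj ∈ Wset G ustar →
      (eIn G (Wset G ustar) : ℝ) <
        (eIn G (Uset G ustar) : ℝ) - ((Uplusset G ustar).ncard : ℝ) + 2
          - α * (dIn G (Uset G ustar) vj : ℝ)) ∧
    (vj ∈ Uplusset G ustar →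
      (eIn G (Wset G ustar) : ℝ) <
        (eIn G (Uset G ustar) : ℝ) - ((Uplusset G ustar).ncard : ℝ) + 2
          - α * ((dIn G (Uset G ustar) vj : ℝ) - 1)) :=
  stmt_5_general G m hm x hpos heig ustar hmaxx α vj hvj hlam
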